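/- Let L and L' be d×k real matrices whose rows l_i, l_i' are all nonzero. If Σ_i ‖l_i'‖₂²/(2‖l_i‖₂) ≤ Σ_i ‖l_i‖₂²/(2‖l_i‖₂), then ‖L'‖_{2,1} ≤ ‖L‖_{2,1}. -/
import Mathlib


open Matrix

theorem stmt_11 (d k : ℕ) (L L' : Matrix (Fin d) (Fin k) ℝ)
    (hrows : ∀ i, L i ≠ 0) (hrows' : ∀ i, L' i ≠ 0)
    (h : ∑ i, (∑ j, (L' i j) ^ 2) / (2 * Real.sqrt (∑ j, (L i j) ^ 2)) ≤
         ∑ i, (∑ j, (L i j) ^ 2) / (2 * Real.sqrt (∑ j, (L i j) ^ 2))) :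
    ∑ i, Real.sqrt (∑ j, (L' i j) ^ 2) ≤ ∑ i, Real.sqrt (∑ j, (L i j) ^ 2) := by
  set s : Fin d → ℝ := fun i => Real.sqrt (∑ j, (L i j) ^ 2) with hs
  have hspos : ∀ i, 0 < s i := by
    intro i
    apply Real.sqrt_pos.2
    have : ∃ j, L i j ≠ 0 := by
      by_contra hc
      push_neg at hc
      exact hrows i (funext hc)
    obtain ⟨j, hj⟩ := this
    exact Finset.sum_pos' (fun j _ => sq_nonneg _) ⟨j, Finset.mem_univ j, by positivity⟩
  have hA : ∀ i, (∑ j, (L' i j) ^ 2) = (Real.sqrt (∑ j, (L' i j) ^ 2)) ^ 2 := fun i =>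
    (Real.sq_sqrt (Finset.sum_nonneg fun j _ => sq_nonneg _)).symm
  have hS : ∀ i, (∑ j, (L i j) ^ 2) = s i ^ 2 := fun i =>
    (Real.sq_sqrt (Finset.sum_nonneg fun j _ => sq_nonneg _)).symm
  have key : ∀ i, Real.sqrt (∑ j, (L' i j) ^ 2) ≤
      (∑ j, (L' i j) ^ 2) / (2 * s i) + s i / 2 := by
    intro i
    set a := Real.sqrt (∑ j, (L' i j) ^ 2)
    rw [hA i]
    have hsp := hspos i
    rw [div_add' _ _ _ (by positivity), le_div_iff₀ (by positivity)]
    nlinarith [sq_nonneg (a - s i)]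
  calc ∑ i, Real.sqrt (∑ j, (L' i j) ^ 2)
      ≤ ∑ i, ((∑ j, (L' i j) ^ 2) / (2 * s i) + s i / 2) :=
        Finset.sum_le_sum fun i _ => key i
    _ = (∑ i, (∑ j, (L' i j) ^ 2) / (2 * s i)) + ∑ i, s i / 2 := Finset.sum_add_distrib
    _ ≤ (∑ i, (∑ j, (L i j) ^ 2) / (2 * s i)) + ∑ i, s i / 2 := by linarith [h]
    _ = ∑ i, s i := by
        rw [← Finset.sum_add_distrib]
        apply Finset.sum_congr rfl
        intro i _
        have hsp := hspos i
        rw [hS i]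
        field_simp
        ring
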